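/- arXiv:2401.06536 — 9 statements merged into one kernel-verified Lean document; each statement's English description precedes it below -/
import Mathlib

section
/- Let a, b, c be real numbers with a < c < b. Then the limit, as Z → 0 in ℂ with Re Z > 0, of ∫_a^b dw/(iZ + c − w) equals log((c − a)/(b − c)) − iπ. -/
open MeasureTheory Filter Complex Topology

/-!
For `Im z ≠ 0` the segment `z - [a, b]` avoids the branch cut of `log`, so
`w ↦ -log (z - w)` is a primitive of `1 / (z - w)` and the integral equals
`log (z - a) - log (z - b)`. As `z → c` from the upper half-plane, `z - a` tends to the
positive real `c - a`, where `log` is continuous, while `z - b` tends to the negative real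
`c - b` from above, where `log` picks up the argument `π`. The substitution `z = iZ + c`
turns `Re Z > 0` into `Im z > 0`.
-/

namespace Complex

lemma integral_one_div_sub_ofReal {z : ℂ} (hz : z.im ≠ 0) (a b : ℝ) :
    ∫ w in a..b, 1 / (z - w) = log (z - a) - log (z - b) := by
  have hslit (w : ℝ) : z - w ∈ slitPlane := mem_slitPlane_iff.mpr (Or.inr (by simpa using hz))
  have hderiv (w : ℝ) : HasDerivAt (fun w : ℝ => -log (z - w)) (1 / (z - w)) w := by
    have hsub : HasDerivAt (fun w : ℝ => z - w) (-1) w := by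
      simpa using (ofRealCLM.hasDerivAt (x := w)).const_sub z
    refine ((hasDerivAt_log (hslit w)).comp w hsub).neg.congr_deriv ?_
    simp
  have hint : IntervalIntegrable (fun w : ℝ => 1 / (z - w)) volume a b :=
    ContinuousOn.intervalIntegrable <|
      continuousOn_const.div (by fun_prop) fun w _ => slitPlane_ne_zero (hslit w)
  rw [intervalIntegral.integral_eq_sub_of_hasDerivAt (fun w _ => hderiv w) hint]
  ring

lemma tendsto_log_sub_ofReal_of_lt {a x : ℝ} (hax : a < x) :
    Tendsto (fun z : ℂ => log (z - a)) (𝓝 (x : ℂ)) (𝓝 (Real.log (x - a) : ℂ)) := by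
  have hpos : ((x - a : ℝ) : ℂ) ∈ slitPlane := ofReal_mem_slitPlane.mpr (sub_pos.mpr hax)
  rw [ofReal_log (sub_pos.mpr hax).le]
  push_cast at hpos ⊢
  exact (continuousAt_clog hpos).tendsto.comp (tendsto_id.sub_const _)

lemma tendsto_log_sub_ofReal_of_gt {x b : ℝ} (hxb : x < b) :
    Tendsto (fun z : ℂ => log (z - b)) (𝓝[{z | 0 < z.im}] (x : ℂ))
      (𝓝 (Real.log (b - x) + Real.pi * I)) := by
  have hlog := tendsto_log_nhdsWithin_im_nonneg_of_re_neg_of_im_zero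
    (z := (x : ℂ) - b) (by simpa using hxb) (by simp)
  have hnorm : ‖(x : ℂ) - b‖ = b - x := by
    rw [← ofReal_sub, norm_real, Real.norm_eq_abs, abs_of_neg (by linarith), neg_sub]
  rw [hnorm] at hlog
  refine hlog.comp (tendsto_nhdsWithin_iff.mpr ⟨?_, ?_⟩)
  · exact (tendsto_id.sub_const _).mono_left nhdsWithin_le_nhds
  · filter_upwards [self_mem_nhdsWithin] with z hz
    simpa using hz.le

lemma tendsto_integral_one_div_sub_ofReal {a b x : ℝ} (hax : a < x) (hxb : x < b) :
    Tendsto (fun z : ℂ => ∫ w in a..b, 1 / (z - w)) (𝓝[{z | 0 < z.im}] (x : ℂ))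
      (𝓝 (Real.log ((x - a) / (b - x)) - Real.pi * I)) := by
  have hlim := ((tendsto_log_sub_ofReal_of_lt hax).mono_left nhdsWithin_le_nhds).sub
    (tendsto_log_sub_ofReal_of_gt hxb)
  rw [Real.log_div (by linarith) (by linarith)]
  refine Tendsto.congr' (eventuallyEq_nhdsWithin_of_eqOn fun z hz =>
    (integral_one_div_sub_ofReal (ne_of_gt hz) a b).symm) ?_
  convert hlim using 2
  push_cast
  ring

lemma tendsto_I_mul_add_ofReal (c : ℝ) :
    Tendsto (fun Z : ℂ => I * Z + c) (𝓝[{Z | 0 < Z.re}] 0) (𝓝[{z | 0 < z.im}] (c : ℂ)) := by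
  refine tendsto_nhdsWithin_iff.mpr ⟨?_, ?_⟩
  · have hcont : Continuous fun Z : ℂ => I * Z + c := by fun_prop
    simpa using (hcont.tendsto 0).mono_left nhdsWithin_le_nhds
  · filter_upwards [self_mem_nhdsWithin] with Z hZ
    simpa using hZ

end Complex

/-- Let `a < c < b` be real. Then as `Z → 0` in `ℂ` with `Re Z > 0`,
`∫ w in a..b, 1/(iZ + c - w)` tends to `log((c-a)/(b-c)) - iπ`. -/
theorem limit_principal_value_integral (a b c : ℝ) (hac : a < c) (hcb : c < b) :
    Tendsto (fun Z : ℂ => ∫ w in a..b, 1 / (Complex.I * Z + (c : ℂ) - (w : ℂ)))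
      (nhdsWithin 0 {Z : ℂ | 0 < Z.re})
      (nhds ((Real.log ((c - a) / (b - c)) : ℂ) - Complex.I * (Real.pi : ℂ))) := by
  rw [mul_comm Complex.I]
  exact (Complex.tendsto_integral_one_div_sub_ofReal hac hcb).comp
    (Complex.tendsto_I_mul_add_ofReal c)
end

section
/- Let ν > 0, let ω : [-1/2,1/2] → ℝ be continuous, and let Z ∈ ℂ with Re Z > 0. Set Θ̃(Z) := 1/(1 + ν ∫_{-1/2}^{1/2} Z/(Z² + ω(k)²) dk). Then Re( 1 + ν ∫_{-1/2}^{1/2} Z/(Z² + ω(k)²) dk ) > 1, the denominator is nonzero, and |Θ̃(Z)| < 1. -/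
open MeasureTheory intervalIntegral

/-! Writing `Z / (Z² + c²) = (Z + c² Z⁻¹)⁻¹` shows that the kernel maps the right half-plane into
itself, since `z ↦ z⁻¹` preserves it. Hence the integral has positive real part, so the
denominator `1 + ν L(C_ω)(Z)` has real part, and a fortiori modulus, greater than `1`. -/

namespace Complex

theorem re_inv_pos {w : ℂ} (hw : 0 < w.re) : 0 < w⁻¹.re := by
  rw [inv_re]
  exact div_pos hw (normSq_pos.mpr fun h ↦ by simp [h] at hw)

theorem re_add_ofReal_sq_mul_inv_pos {Z : ℂ} (hZ : 0 < Z.re) (c : ℝ) :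
    0 < (Z + (c : ℂ) ^ 2 * Z⁻¹).re := by
  have : 0 ≤ ((c : ℂ) ^ 2 * Z⁻¹).re := by
    rw [← ofReal_pow, re_ofReal_mul]
    exact mul_nonneg (sq_nonneg c) (re_inv_pos hZ).le
  rw [add_re]
  linarith

theorem sq_add_ofReal_sq_eq_mul {Z : ℂ} (hZ : Z ≠ 0) (c : ℝ) :
    Z ^ 2 + (c : ℂ) ^ 2 = Z * (Z + (c : ℂ) ^ 2 * Z⁻¹) := by
  field_simp

theorem sq_add_ofReal_sq_ne_zero {Z : ℂ} (hZ : 0 < Z.re) (c : ℝ) :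
    Z ^ 2 + (c : ℂ) ^ 2 ≠ 0 := by
  have hZ0 : Z ≠ 0 := fun h ↦ by simp [h] at hZ
  rw [sq_add_ofReal_sq_eq_mul hZ0]
  exact mul_ne_zero hZ0 fun h ↦ by simpa [h] using re_add_ofReal_sq_mul_inv_pos hZ c

theorem re_div_sq_add_ofReal_sq_pos {Z : ℂ} (hZ : 0 < Z.re) (c : ℝ) :
    0 < (Z / (Z ^ 2 + (c : ℂ) ^ 2)).re := by
  have hZ0 : Z ≠ 0 := fun h ↦ by simp [h] at hZ
  rw [sq_add_ofReal_sq_eq_mul hZ0, div_mul_cancel_left₀ hZ0]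
  exact re_inv_pos (re_add_ofReal_sq_mul_inv_pos hZ c)

theorem norm_one_div_lt_one_of_one_lt_re {w : ℂ} (hw : 1 < w.re) : ‖1 / w‖ < 1 := by
  have : 1 < ‖w‖ := hw.trans_le (re_le_norm w)
  rw [norm_div, norm_one]
  exact (div_lt_one (one_pos.trans this)).mpr this

end Complex

theorem intervalIntegral.re_integral_pos_of_re_pos_on {f : ℝ → ℂ} {a b : ℝ}
    (hf : IntervalIntegrable f volume a b) (hpos : ∀ x ∈ Set.Ioo a b, 0 < (f x).re)
    (hab : a < b) : 0 < (∫ x in a..b, f x).re :=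
  calc 0 < ∫ x in a..b, (f x).re := intervalIntegral_pos_of_pos_on ⟨hf.1.re, hf.2.re⟩ hpos hab
    _ = _ := intervalIntegral_re hf

/-- For `ν > 0`, `ω : [-1/2,1/2] → ℝ` continuous and `Re Z > 0`, with
`Θ̃(Z) = 1/(1 + ν ∫ Z/(Z² + ω(k)²) dk)`: the real part of the denominator exceeds `1`,
the denominator is nonzero, and `|Θ̃(Z)| < 1`. -/
theorem theta_multiplier_bounded (ν : ℝ) (hν : 0 < ν) (ω : ℝ → ℝ)
    (hω : ContinuousOn ω (Set.Icc (-(1/2) : ℝ) (1/2))) (Z : ℂ) (hZ : 0 < Z.re) :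
    1 < ((1 : ℂ) + (ν : ℂ) * ∫ k in (-(1/2) : ℝ)..(1/2), Z / (Z ^ 2 + ((ω k : ℂ)) ^ 2)).re ∧
    (1 : ℂ) + (ν : ℂ) * (∫ k in (-(1/2) : ℝ)..(1/2), Z / (Z ^ 2 + ((ω k : ℂ)) ^ 2)) ≠ 0 ∧
    ‖(1 / ((1 : ℂ) + (ν : ℂ) *
      ∫ k in (-(1/2) : ℝ)..(1/2), Z / (Z ^ 2 + ((ω k : ℂ)) ^ 2)))‖ < 1 := by
  have hhalf : (-(1/2) : ℝ) < 1/2 := by norm_num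
  have hint : IntervalIntegrable (fun k ↦ Z / (Z ^ 2 + (ω k : ℂ) ^ 2)) volume (-(1/2)) (1/2) := by
    refine ContinuousOn.intervalIntegrable ?_
    rw [Set.uIcc_of_le hhalf.le]
    refine continuousOn_const.div ?_ fun k _ ↦ Complex.sq_add_ofReal_sq_ne_zero hZ (ω k)
    exact continuousOn_const.add ((Complex.continuous_ofReal.comp_continuousOn hω).pow 2)
  have hI := re_integral_pos_of_re_pos_on hint
    (fun k _ ↦ Complex.re_div_sq_add_ofReal_sq_pos hZ (ω k)) hhalf
  have hre :
      1 < ((1 : ℂ) + (ν : ℂ) * ∫ k in (-(1/2) : ℝ)..(1/2), Z / (Z ^ 2 + ((ω k : ℂ)) ^ 2)).re := by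
    rw [Complex.add_re, Complex.one_re, Complex.re_ofReal_mul]
    linarith [mul_pos hν hI]
  exact ⟨hre, fun h ↦ by norm_num [h] at hre, Complex.norm_one_div_lt_one_of_one_lt_re hre⟩
end

section
/- Let ν > 0, let d ∈ ℝ with d ≠ 0, and let L ∈ ℂ with Re L = π/|d|. Set θ := 1/(1 + νL) (the denominator is nonzero since its real part exceeds 1). Then Re θ = (1 + νπ/|d|)·|θ|². Moreover, setting v := d/(2π), r_a := ν|θ|²/|v|, r_r := ν r_a/(4|v|), and r_t := 1 − Re(θ)·ν/|v| + ν r_a/(4|v|), one has r_a + r_t + r_r = 1. -/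
/-!
Since `Re (1/z) = Re z · |1/z|²`, the real part of `θ = 1/(1 + νL)` is `(1 + νπ/|d|)|θ|²`, and
`1 + νL` has positive real part. With `v = d/(2π)` one has `νπ/|d| = ν/(2|v|)`, and then the
absorption, transmission and reflection rates add up to `1` by a linear identity in `Re θ`.
-/

open Complex

theorem Complex.re_inv_eq_re_mul_norm_inv_sq (z : ℂ) : z⁻¹.re = z.re * ‖z⁻¹‖ ^ 2 := by
  rw [inv_re, Complex.sq_norm, map_inv₀, div_eq_mul_inv]

theorem pi_div_abs_eq_one_div_two_mul_abs_div_two_pi (d : ℝ) :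
    Real.pi / |d| = 1 / (2 * |d / (2 * Real.pi)|) := by
  rw [abs_div, abs_of_pos Real.two_pi_pos]
  field_simp

theorem thermostat_rates_sum_one_general (ν d : ℝ) (hν : 0 < ν)
    (L : ℂ) (hL : L.re = Real.pi / |d|)
    (θ : ℂ) (hθ : θ = 1 / (1 + (ν : ℂ) * L))
    (v ra rt rr : ℝ)
    (hv : v = d / (2 * Real.pi))
    (hra : ra = ν * ‖θ‖ ^ 2 / |v|)
    (hrt : rt = 1 - θ.re * ν / |v| + ν * ra / (4 * |v|))
    (hrr : rr = ν * ra / (4 * |v|)) :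
    (1 + (ν : ℂ) * L) ≠ 0 ∧
    θ.re = (1 + ν * Real.pi / |d|) * ‖θ‖ ^ 2 ∧
    ra + rt + rr = 1 := by
  have hre : (1 + (ν : ℂ) * L).re = 1 + ν * Real.pi / |d| := by
    simp [hL, mul_div_assoc]
  have hne : (1 + (ν : ℂ) * L) ≠ 0 := ne_zero_of_re_pos (by rw [hre]; positivity)
  have hθre : θ.re = (1 + ν * Real.pi / |d|) * ‖θ‖ ^ 2 := by
    rw [hθ, one_div, re_inv_eq_re_mul_norm_inv_sq, hre]
  refine ⟨hne, hθre, ?_⟩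
  have hπv : ν * Real.pi / |d| = ν / (2 * |v|) := by
    rw [mul_div_assoc, pi_div_abs_eq_one_div_two_mul_abs_div_two_pi, ← hv, mul_one_div]
  rw [hπv] at hθre
  rw [hrt, hrr, hra]
  linear_combination (-ν / |v|) * hθre

/-- For `ν > 0`, `d ≠ 0`, `L ∈ ℂ` with `Re L = π/|d|`, `θ = 1/(1 + νL)`:
the denominator is nonzero, `Re θ = (1 + νπ/|d|)|θ|²`, and the rates
`r_a = ν|θ|²/|v|`, `r_r = ν r_a/(4|v|)`, `r_t = 1 - Re(θ) ν/|v| + ν r_a/(4|v|)`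
with `v = d/(2π)` sum to `1`. -/
theorem thermostat_rates_sum_one (ν d : ℝ) (hν : 0 < ν) (hd : d ≠ 0)
    (L : ℂ) (hL : L.re = Real.pi / |d|)
    (θ : ℂ) (hθ : θ = 1 / (1 + (ν : ℂ) * L))
    (v ra rt rr : ℝ)
    (hv : v = d / (2 * Real.pi))
    (hra : ra = ν * ‖θ‖ ^ 2 / |v|)
    (hrt : rt = 1 - θ.re * ν / |v| + ν * ra / (4 * |v|))
    (hrr : rr = ν * ra / (4 * |v|)) :
    (1 + (ν : ℂ) * L) ≠ 0 ∧
    θ.re = (1 + ν * Real.pi / |d|) * ‖θ‖ ^ 2 ∧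
    ra + rt + rr = 1 :=
  thermostat_rates_sum_one_general ν d hν L hL θ hθ v ra rt rr hv hra hrt hrr
end

section
/- Let v ∈ ℝ with v ≠ 0, let w ∈ ℂ, and let L ∈ ℂ with Re L = 1/(2|v|). Assume 1 − conj(w)·L ≠ 0 and set θ_F := 1/(1 − conj(w)·L). Then Re( conj(w)·θ_F ) = ( Re w − |w|²/(2|v|) )·|θ_F|². Moreover, setting r_a^F := −Re(w)·|θ_F|²/|v|, r_t^F := 1 + Re(conj(w)·θ_F)/|v| + |w|²|θ_F|²/(4v²), and r_r^F := |w|²|θ_F|²/(4v²), one has r_a^F + r_t^F + r_r^F = 1. -/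
open Complex ComplexConjugate

/-!
Writing `θ_F = D⁻¹` with `D = 1 - w̄ L`, one has `w̄ θ_F = w̄ D̄ · |θ_F|²` and
`Re (w̄ D̄) = Re w - |w|² Re L`, which gives the formula for `Re (w̄ θ_F)`. Substituting it into
`r_t^F`, the term `-|w|²|θ_F|²/(2v²)` it produces cancels `r_r^F` plus the last term of `r_t^F`,
and the `Re w` terms cancel against `r_a^F`.
-/

theorem Complex.re_mul_inv (z D : ℂ) : (z * D⁻¹).re = (z * conj D).re * ‖D⁻¹‖ ^ 2 := by
  rw [norm_inv, inv_pow, Complex.sq_norm, inv_def, ← mul_assoc, re_mul_ofReal]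

theorem Complex.re_conj_mul_conj_one_sub_conj_mul (w L : ℂ) :
    (conj w * conj (1 - conj w * L)).re = w.re - ‖w‖ ^ 2 * L.re := by
  simp only [map_sub, map_one, map_mul, conj_conj, mul_sub, mul_one, ← mul_assoc,
    mul_comm (conj w) w, mul_conj, sub_re, re_ofReal_mul, conj_re, normSq_eq_norm_sq]

theorem controlled_rates_sum_one_general (v : ℝ) (w L : ℂ)
    (hL : L.re = 1 / (2 * |v|))
    (θF : ℂ) (hθF : θF = 1 / (1 - (starRingEnd ℂ) w * L))
    (raF rtF rrF : ℝ)
    (hra : raF = -w.re * ‖θF‖ ^ 2 / |v|)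
    (hrt : rtF = 1 + ((starRingEnd ℂ) w * θF).re / |v|
      + ‖w‖ ^ 2 * ‖θF‖ ^ 2 / (4 * v ^ 2))
    (hrr : rrF = ‖w‖ ^ 2 * ‖θF‖ ^ 2 / (4 * v ^ 2)) :
    ((starRingEnd ℂ) w * θF).re
      = (w.re - ‖w‖ ^ 2 / (2 * |v|)) * ‖θF‖ ^ 2 ∧
    raF + rtF + rrF = 1 := by
  have hre : ((starRingEnd ℂ) w * θF).re = (w.re - ‖w‖ ^ 2 / (2 * |v|)) * ‖θF‖ ^ 2 := by
    rw [hθF, one_div, re_mul_inv, re_conj_mul_conj_one_sub_conj_mul, hL]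
    ring
  refine ⟨hre, ?_⟩
  rw [hra, hrt, hrr, hre, ← sq_abs v]
  ring

/-- For `v ≠ 0`, `w, L ∈ ℂ` with `Re L = 1/(2|v|)`, `1 - w̄ L ≠ 0` and
`θ_F = 1/(1 - w̄ L)`: `Re(w̄ θ_F) = (Re w - |w|²/(2|v|))|θ_F|²`, and the controlled rates
`r_a^F = -Re(w)|θ_F|²/|v|`, `r_t^F = 1 + Re(w̄ θ_F)/|v| + |w|²|θ_F|²/(4v²)`,
`r_r^F = |w|²|θ_F|²/(4v²)` sum to `1`. -/
theorem controlled_rates_sum_one (v : ℝ) (hv : v ≠ 0) (w L : ℂ)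
    (hL : L.re = 1 / (2 * |v|))
    (hden : 1 - (starRingEnd ℂ) w * L ≠ 0)
    (θF : ℂ) (hθF : θF = 1 / (1 - (starRingEnd ℂ) w * L))
    (raF rtF rrF : ℝ)
    (hra : raF = -w.re * ‖θF‖ ^ 2 / |v|)
    (hrt : rtF = 1 + ((starRingEnd ℂ) w * θF).re / |v|
      + ‖w‖ ^ 2 * ‖θF‖ ^ 2 / (4 * v ^ 2))
    (hrr : rrF = ‖w‖ ^ 2 * ‖θF‖ ^ 2 / (4 * v ^ 2)) :
    ((starRingEnd ℂ) w * θF).re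
      = (w.re - ‖w‖ ^ 2 / (2 * |v|)) * ‖θF‖ ^ 2 ∧
    raF + rtF + rrF = 1 :=
  controlled_rates_sum_one_general v w L hL θF hθF raF rtF rrF hra hrt hrr
end

section
/- Let ν > 0 and 0 < C'' ≤ C'. Let w ∈ ℂ with |w| ≤ C' and Re w ≤ −C'', and let θ ∈ ℂ with θ ≠ 0 and Re(1/θ) ≥ 1. Then |1 − (w/ν)·(1/θ − 1)| ≥ (C''/C')². -/
open Complex

open scoped ComplexConjugate

/- Put `z = 1/θ - 1`, so `Re z ≥ 0`. For every `u`, `Re ((1 - u z) · conj u) = Re u - |u|² Re z ≤ Re u`,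
hence `-Re u ≤ |u| · |1 - u z|`. Taking `u = w / ν` and clearing `ν` gives
`C'' ≤ -Re w ≤ C' · |1 - u z|`, so `|1 - u z| ≥ C''/C' ≥ (C''/C')²` as `C''/C' ≤ 1`. -/

theorem Complex.re_one_sub_mul_mul_conj (u z : ℂ) :
    ((1 - u * z) * conj u).re = u.re - z.re * normSq u := by
  have h : (1 - u * z) * conj u = conj u - z * (normSq u : ℂ) := by
    rw [← mul_conj]; ring
  simp [h]

theorem Complex.neg_re_le_norm_mul_norm_one_sub_mul {u z : ℂ} (hz : 0 ≤ z.re) :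
    -u.re ≤ ‖u‖ * ‖1 - u * z‖ :=
  calc -u.re ≤ -((1 - u * z) * conj u).re := by
        rw [re_one_sub_mul_mul_conj]
        linarith [mul_nonneg hz (normSq_nonneg u)]
    _ ≤ ‖(1 - u * z) * conj u‖ := (neg_le_abs _).trans (abs_re_le_norm _)
    _ = ‖u‖ * ‖1 - u * z‖ := by rw [norm_mul, norm_conj, mul_comm]

theorem Complex.neg_re_le_norm_mul_norm_one_sub_div_ofReal_mul {w z : ℂ} {ν : ℝ} (hν : 0 < ν)
    (hz : 0 ≤ z.re) : -w.re ≤ ‖w‖ * ‖1 - w / (ν : ℂ) * z‖ := by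
  have h := neg_re_le_norm_mul_norm_one_sub_mul (u := w / (ν : ℂ)) hz
  rw [div_ofReal_re, norm_div, norm_real, Real.norm_of_nonneg hν.le, ← neg_div, div_mul_eq_mul_div,
    div_le_div_iff_of_pos_right hν] at h
  exact h

theorem thetaF_denominator_lower_bound_general (ν C' C'' : ℝ) (hν : 0 < ν)
    (hC'' : 0 < C'') (hC : C'' ≤ C') (w θ : ℂ)
    (hw₁ : ‖w‖ ≤ C') (hw₂ : w.re ≤ -C'')
    (hθre : 1 ≤ (1 / θ).re) :
    (C'' / C') ^ 2 ≤ ‖1 - (w / (ν : ℂ)) * (1 / θ - 1)‖ := by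
  set N := ‖1 - (w / (ν : ℂ)) * (1 / θ - 1)‖
  have hC' : 0 < C' := hC''.trans_le hC
  have hz : 0 ≤ (1 / θ - 1).re := by simpa using hθre
  have hratio : C'' / C' ≤ N := by
    rw [div_le_iff₀ hC']
    calc C'' ≤ -w.re := by linarith
      _ ≤ ‖w‖ * N := neg_re_le_norm_mul_norm_one_sub_div_ofReal_mul hν hz
      _ ≤ C' * N := by gcongr
      _ = N * C' := mul_comm _ _
  have hle_one : C'' / C' ≤ 1 := (div_le_one hC').mpr hC
  calc (C'' / C') ^ 2 ≤ C'' / C' := pow_le_of_le_one (by positivity) hle_one two_ne_zero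
    _ ≤ N := hratio

/-- For `ν > 0`, `0 < C'' ≤ C'`, `w ∈ ℂ` with `|w| ≤ C'` and `Re w ≤ -C''`, and `θ ∈ ℂ`
with `θ ≠ 0` and `Re(1/θ) ≥ 1`: `|1 - (w/ν)(1/θ - 1)| ≥ (C''/C')²`. -/
theorem thetaF_denominator_lower_bound (ν C' C'' : ℝ) (hν : 0 < ν)
    (hC'' : 0 < C'') (hC : C'' ≤ C') (w θ : ℂ)
    (hw₁ : ‖w‖ ≤ C') (hw₂ : w.re ≤ -C'')
    (hθ : θ ≠ 0) (hθre : 1 ≤ (1 / θ).re) :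
    (C'' / C') ^ 2 ≤ ‖1 - (w / (ν : ℂ)) * (1 / θ - 1)‖ :=
  thetaF_denominator_lower_bound_general ν C' C'' hν hC'' hC w θ hw₁ hw₂ hθre
end

section
/- There exists a constant C > 0 such that for every b ∈ ℝ, ∫_ℝ da/((1 + |a + b|)(1 + a²)) ≤ C/(1 + |b|). -/
open MeasureTheory

private lemma key_poly (a b : ℝ) :
    (1+|b|)*(1+(a+b)^2) ≤ 9*(1+|a+b|)*(2+a^2+(a+b)^2) := by
  have h1 : |b| ≤ |a+b| + |a| := by
    calc |b| = |(a+b) - a| := by ring_nf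
    _ ≤ |a+b| + |a| := abs_sub _ _
  have ha := abs_nonneg a; have hb := abs_nonneg b; have hab := abs_nonneg (a+b)
  have sa := sq_abs a; have sab := sq_abs (a+b)
  rcases le_or_gt (|b|) (3*|a+b|+2) with h | h
  · nlinarith [sq_nonneg (|a+b|), mul_nonneg hab (sq_nonneg (a+b)), sq_nonneg a]
  · have hw : (2*|b|+2)/3 < |a| := by linarith
    nlinarith [mul_nonneg hab (sq_nonneg a), mul_nonneg hb (sq_nonneg (a+b)),
      mul_nonneg (mul_nonneg hb hab) hab, sq_nonneg (|a|-|b|),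
      mul_pos (lt_of_le_of_lt (by linarith : (0:ℝ) ≤ (2*|b|+2)/3) hw)
        (lt_of_le_of_lt (by linarith) hw)]

private lemma key_pt (a b : ℝ) :
    1 / ((1 + |a + b|) * (1 + a ^ 2)) ≤
      9 / (1 + |b|) * (1 / (1 + a ^ 2) + 1 / (1 + (a + b) ^ 2)) := by
  have h2 : (0:ℝ) < 1 + a ^ 2 := by positivity
  have h3 : (0:ℝ) < 1 + (a+b) ^ 2 := by positivity
  have h1 : (0:ℝ) < 1 + |a+b| := by positivity
  have hB : (0:ℝ) < 1 + |b| := by positivity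
  rw [div_add_div _ _ (ne_of_gt h2) (ne_of_gt h3), div_mul_div_comm,
    div_le_div_iff₀ (by positivity) (by positivity)]
  have := key_poly a b
  nlinarith [mul_pos h2 (mul_pos h1 h3), mul_le_mul_of_nonneg_left this (le_of_lt h2)]

/-- There is `C > 0` such that for every `b ∈ ℝ`,
`∫_ℝ da/((1+|a+b|)(1+a²)) ≤ C/(1+|b|)`. -/
theorem lorentzian_slow_kernel_estimate :
    ∃ C : ℝ, 0 < C ∧ ∀ b : ℝ,
      (∫ a : ℝ, 1 / ((1 + |a + b|) * (1 + a ^ 2))) ≤ C / (1 + |b|) := by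
  refine ⟨18 * Real.pi, by positivity, fun b => ?_⟩
  have hint1 : Integrable (fun a : ℝ => 1 / (1 + a ^ 2)) := by
    simpa only [one_div] using integrable_inv_one_add_sq
  have hint2 : Integrable (fun a : ℝ => 1 / (1 + (a + b) ^ 2)) :=
    hint1.comp_add_right b
  have hcont : Continuous (fun a : ℝ => 1 / ((1 + |a + b|) * (1 + a ^ 2))) := by
    apply Continuous.div continuous_const
    · fun_prop
    · intro x; positivity
  have hintf : Integrable (fun a : ℝ => 1 / ((1 + |a + b|) * (1 + a ^ 2))) := by
    refine Integrable.mono' hint1 hcont.aestronglyMeasurable ?_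
    filter_upwards with a
    have h1 : (0:ℝ) < 1 + |a+b| := by positivity
    have h2 : (0:ℝ) < 1 + a ^ 2 := by positivity
    rw [Real.norm_eq_abs, abs_of_nonneg (by positivity)]
    rw [div_le_div_iff₀ (by positivity) h2]
    nlinarith [abs_nonneg (a+b), mul_nonneg (abs_nonneg (a+b)) (le_of_lt h2)]
  have hintg : Integrable (fun a : ℝ =>
      9 / (1 + |b|) * (1 / (1 + a ^ 2) + 1 / (1 + (a + b) ^ 2))) :=
    (hint1.add hint2).const_mul _
  calc (∫ a : ℝ, 1 / ((1 + |a + b|) * (1 + a ^ 2)))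
      ≤ ∫ a : ℝ, 9 / (1 + |b|) * (1 / (1 + a ^ 2) + 1 / (1 + (a + b) ^ 2)) :=
        integral_mono hintf hintg (fun a => key_pt a b)
    _ = 9 / (1 + |b|) * (Real.pi + Real.pi) := by
        rw [integral_const_mul, integral_add hint1 hint2]
        congr 1
        · congr 1
          · simpa only [one_div] using integral_univ_inv_one_add_sq
          · rw [integral_add_right_eq_self (fun x : ℝ => 1 / (1 + x ^ 2)) b]
            simpa only [one_div] using integral_univ_inv_one_add_sq
    _ = 18 * Real.pi / (1 + |b|) := by ring
end

section
/- There exists a constant C > 0 such that for every ε ∈ (0, 1/4) and every E ∈ [0, 1]: ∫₀^ε du/((ε + |u − E|)·√u) + ε^{−1/2} ∫_ε^{1−ε} du/(ε + |u − E|) + ∫_{1−ε}^{1} du/((ε + |u − E|)·√(1 − u)) ≤ C·ε^{−1/2}·log(1/ε). -/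
open MeasureTheory intervalIntegral

lemma edge_bound (ε E : ℝ) (hε : 0 < ε) :
    (∫ u in (0:ℝ)..ε, 1 / ((ε + |u - E|) * Real.sqrt u)) ≤ 2 * ε ^ (-(1/2) : ℝ) := by
  have hg : IntervalIntegrable (fun u : ℝ => ε⁻¹ * u ^ (-(1/2) : ℝ)) volume 0 ε :=
    (intervalIntegral.intervalIntegrable_rpow' (by norm_num)).const_mul _
  have hmeas : AEStronglyMeasurable (fun u : ℝ => 1 / ((ε + |u - E|) * Real.sqrt u))
      (volume.restrict (Set.uIoc (0:ℝ) ε)) := by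
    apply Measurable.aestronglyMeasurable
    fun_prop
  have hle : ∀ u ∈ Set.Icc (0:ℝ) ε,
      1 / ((ε + |u - E|) * Real.sqrt u) ≤ ε⁻¹ * u ^ (-(1/2) : ℝ) := by
    intro u hu
    rcases eq_or_lt_of_le hu.1 with h0 | h0
    · rw [← h0]
      simp [Real.zero_rpow]
    · have hs : 0 < Real.sqrt u := Real.sqrt_pos.2 h0
      have h1 : 1 / ((ε + |u - E|) * Real.sqrt u) ≤ 1 / (ε * Real.sqrt u) := by
        apply one_div_le_one_div_of_le (by positivity)
        apply mul_le_mul_of_nonneg_right _ hs.le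
        simp [abs_nonneg]
      have h2 : 1 / (ε * Real.sqrt u) = ε⁻¹ * u ^ (-(1/2) : ℝ) := by
        rw [one_div, mul_inv, Real.sqrt_eq_rpow, ← Real.rpow_neg h0.le]
      linarith
  have hnn : ∀ u ∈ Set.Icc (0:ℝ) ε, 0 ≤ 1 / ((ε + |u - E|) * Real.sqrt u) := by
    intro u hu
    have : 0 ≤ Real.sqrt u := Real.sqrt_nonneg u
    positivity
  have hf_int : IntervalIntegrable (fun u : ℝ => 1 / ((ε + |u - E|) * Real.sqrt u))
      volume 0 ε := by
    apply hg.mono_fun hmeas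
    filter_upwards [ae_restrict_mem measurableSet_uIoc] with u hu
    rw [Set.uIoc_of_le hε.le] at hu
    have hu' : u ∈ Set.Icc (0:ℝ) ε := ⟨hu.1.le, hu.2⟩
    rw [Real.norm_eq_abs, Real.norm_eq_abs, abs_of_nonneg (hnn u hu')]
    calc 1 / ((ε + |u - E|) * Real.sqrt u) ≤ ε⁻¹ * u ^ (-(1/2) : ℝ) := hle u hu'
      _ ≤ |ε⁻¹ * u ^ (-(1/2) : ℝ)| := le_abs_self _
  have hmono := intervalIntegral.integral_mono_on hε.le hf_int hg hle
  have hcalc : (∫ u in (0:ℝ)..ε, ε⁻¹ * u ^ (-(1/2) : ℝ)) = 2 * ε ^ (-(1/2) : ℝ) := by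
    rw [intervalIntegral.integral_const_mul,
      integral_rpow (Or.inl (by norm_num))]
    rw [Real.zero_rpow (by norm_num)]
    rw [show (-(1/2) : ℝ) + 1 = 1/2 by ring]
    rw [show (-(1/2) : ℝ) = 1/2 + (-1) by ring, Real.rpow_add hε, Real.rpow_neg_one]
    field_simp
    ring
  linarith

lemma mid_bound (ε E : ℝ) (hε : 0 < ε) (hε4 : ε < 1/4) (hE0 : 0 ≤ E) (hE1 : E ≤ 1) :
    (∫ u in ε..(1 - ε), 1 / (ε + |u - E|)) ≤ 4 * Real.log (1/ε) := by
  have hd : ∀ u : ℝ, 0 < ε + |u - E| := fun u => by positivity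
  have hcont : Continuous fun u : ℝ => 1 / (ε + |u - E|) := by
    apply Continuous.div continuous_const
    · exact continuous_const.add ((continuous_id.sub continuous_const).abs)
    · exact fun u => (hd u).ne'
  have hsub : (∫ u in ε..(1 - ε), 1 / (ε + |u - E|))
      ≤ ∫ u in (E - 1)..(E + 1), 1 / (ε + |u - E|) := by
    rw [intervalIntegral.integral_of_le (by linarith),
        intervalIntegral.integral_of_le (by linarith)]
    apply setIntegral_mono_set
    · exact hcont.integrableOn_Ioc
    · filter_upwards with u using by positivity
    · exact HasSubset.Subset.eventuallyLE (Set.Ioc_subset_Ioc (by linarith) (by linarith))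
  have hsplit : (∫ u in (E - 1)..(E + 1), 1 / (ε + |u - E|))
      = (∫ u in (E - 1)..E, 1 / (ε + |u - E|)) + ∫ u in E..(E + 1), 1 / (ε + |u - E|) :=
    (intervalIntegral.integral_add_adjacent_intervals
      (hcont.intervalIntegrable _ _) (hcont.intervalIntegrable _ _)).symm
  have hright : (∫ u in E..(E + 1), 1 / (ε + |u - E|)) = Real.log ((1 + ε) / ε) := by
    have hcongr : Set.EqOn (fun u : ℝ => 1 / (ε + |u - E|))
        (fun u : ℝ => (fun x : ℝ => 1 / x) (u - (E - ε))) (Set.uIcc E (E + 1)) := by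
      intro u hu
      rw [Set.uIcc_of_le (by linarith)] at hu
      simp only
      rw [abs_of_nonneg (by linarith [hu.1])]
      ring_nf
    rw [intervalIntegral.integral_congr hcongr,
        intervalIntegral.integral_comp_sub_right (fun x : ℝ => 1 / x) (E - ε),
        show E - (E - ε) = ε by ring, show E + 1 - (E - ε) = 1 + ε by ring,
        integral_one_div]
    rw [Set.uIcc_of_le (by linarith)]
    intro h
    simp only [Set.mem_Icc] at h
    linarith [h.1]
  have hleft : (∫ u in (E - 1)..E, 1 / (ε + |u - E|)) = Real.log ((1 + ε) / ε) := by
    have hcongr : Set.EqOn (fun u : ℝ => 1 / (ε + |u - E|))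
        (fun u : ℝ => (fun x : ℝ => 1 / x) ((E + ε) - u)) (Set.uIcc (E - 1) E) := by
      intro u hu
      rw [Set.uIcc_of_le (by linarith)] at hu
      simp only
      rw [abs_of_nonpos (by linarith [hu.2])]
      ring_nf
    rw [intervalIntegral.integral_congr hcongr,
        intervalIntegral.integral_comp_sub_left (fun x : ℝ => 1 / x) (E + ε),
        show E + ε - E = ε by ring, show E + ε - (E - 1) = 1 + ε by ring,
        integral_one_div]
    rw [Set.uIcc_of_le (by linarith)]
    intro h
    simp only [Set.mem_Icc] at h
    linarith [h.1]
  have hlog : Real.log ((1 + ε) / ε) ≤ 2 * Real.log (1/ε) := by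
    have h1 : (1 + ε) / ε ≤ (1/ε) ^ (2:ℕ) := by
      rw [div_pow, one_pow, div_le_div_iff₀ hε (by positivity)]
      nlinarith
    calc Real.log ((1 + ε) / ε) ≤ Real.log ((1/ε) ^ (2:ℕ)) :=
          Real.log_le_log (by positivity) h1
      _ = 2 * Real.log (1/ε) := by rw [Real.log_pow]; push_cast; ring
  linarith

/-- There is `C > 0` such that for all `ε ∈ (0,1/4)` and `E ∈ [0,1]`:
`∫₀^ε du/((ε+|u-E|)√u) + ε^{-1/2} ∫_ε^{1-ε} du/(ε+|u-E|)
  + ∫_{1-ε}^1 du/((ε+|u-E|)√(1-u)) ≤ C ε^{-1/2} log(1/ε)`. -/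
theorem composite_singular_estimate :
    ∃ C : ℝ, 0 < C ∧ ∀ ε : ℝ, ε ∈ Set.Ioo (0 : ℝ) (1 / 4) → ∀ E ∈ Set.Icc (0 : ℝ) 1,
      (∫ u in (0 : ℝ)..ε, 1 / ((ε + |u - E|) * Real.sqrt u))
        + ε ^ (-(1 / 2) : ℝ) * (∫ u in ε..(1 - ε), 1 / (ε + |u - E|))
        + (∫ u in (1 - ε)..1, 1 / ((ε + |u - E|) * Real.sqrt (1 - u)))
      ≤ C * ε ^ (-(1 / 2) : ℝ) * Real.log (1 / ε) := by
  refine ⟨8, by norm_num, ?_⟩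
  rintro ε ⟨hε, hε4⟩ E ⟨hE0, hE1⟩
  have hT1 := edge_bound ε E hε
  have hT2 := mid_bound ε E hε hε4 hE0 hE1
  have hT3 : (∫ u in (1 - ε)..1, 1 / ((ε + |u - E|) * Real.sqrt (1 - u)))
      ≤ 2 * ε ^ (-(1/2) : ℝ) := by
    have key : ∀ x : ℝ, 1 / ((ε + |x - E|) * Real.sqrt (1 - x))
        = (fun v : ℝ => 1 / ((ε + |v - (1 - E)|) * Real.sqrt v)) (1 - x) := by
      intro x
      simp only
      rw [show (1 - x) - (1 - E) = E - x by ring, abs_sub_comm]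
    have hcomp := intervalIntegral.integral_comp_sub_left
      (a := 1 - ε) (b := 1) (fun v : ℝ => 1 / ((ε + |v - (1 - E)|) * Real.sqrt v)) 1
    rw [show (1:ℝ) - 1 = 0 by ring, show (1:ℝ) - (1 - ε) = ε by ring] at hcomp
    calc (∫ u in (1 - ε)..1, 1 / ((ε + |u - E|) * Real.sqrt (1 - u)))
        = ∫ u in (1 - ε)..1,
            (fun v : ℝ => 1 / ((ε + |v - (1 - E)|) * Real.sqrt v)) (1 - u) := by
          simp_rw [← key]
      _ = ∫ v in (0:ℝ)..ε, 1 / ((ε + |v - (1 - E)|) * Real.sqrt v) := hcomp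
      _ ≤ 2 * ε ^ (-(1/2) : ℝ) := edge_bound ε (1 - E) hε
  have hA : 0 < ε ^ (-(1/2) : ℝ) := Real.rpow_pos_of_pos hε _
  have hL : 1 ≤ Real.log (1/ε) := by
    rw [Real.le_log_iff_exp_le (by positivity)]
    have h4 : (4:ℝ) ≤ 1/ε := by
      rw [le_div_iff₀ hε]; linarith
    linarith [Real.exp_one_lt_d9]
  have h2 : ε ^ (-(1/2) : ℝ) * (∫ u in ε..(1 - ε), 1 / (ε + |u - E|))
      ≤ ε ^ (-(1/2) : ℝ) * (4 * Real.log (1/ε)) :=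
    mul_le_mul_of_nonneg_left hT2 hA.le
  have h4 : 4 * ε ^ (-(1/2) : ℝ) ≤ 4 * ε ^ (-(1/2) : ℝ) * Real.log (1/ε) := by
    nlinarith
  nlinarith
end

section
/- Let w, θ ∈ ℂ and let v ∈ ℝ with v ≠ 0. Define r_t := 1 + Re(conj(w)·θ)/|v| + |w|²|θ|²/(4v²) and r_r := |w|²|θ|²/(4v²). Then r_t = |1 + conj(w)·θ/(2|v|)|², so r_t ≥ 0, and √r_t + √r_r ≥ 1. -/
/-!
With `z = w̄θ / (2|v|)` one has `r_t = ‖1 + z‖²` and `r_r = ‖z‖²`, so `√r_t + √r_r ≥ 1` is the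
triangle inequality `‖1‖ ≤ ‖1 + z‖ + ‖z‖`.
-/

open Complex

theorem Complex.sq_norm_one_add (z : ℂ) : ‖1 + z‖ ^ 2 = 1 + 2 * z.re + ‖z‖ ^ 2 := by
  rw [Complex.sq_norm, Complex.sq_norm, normSq_add, normSq_one, one_mul, conj_re]
  ring

theorem sqrt_rates_sum_ge_one_general (v : ℝ) (w θ : ℂ) (rt rr : ℝ)
    (hrt : rt = 1 + ((starRingEnd ℂ) w * θ).re / |v|
      + ‖w‖ ^ 2 * ‖θ‖ ^ 2 / (4 * v ^ 2))
    (hrr : rr = ‖w‖ ^ 2 * ‖θ‖ ^ 2 / (4 * v ^ 2)) :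
    rt = ‖1 + (starRingEnd ℂ) w * θ / ((2 * |v| : ℝ) : ℂ)‖ ^ 2 ∧
    0 ≤ rt ∧
    1 ≤ Real.sqrt rt + Real.sqrt rr := by
  set z : ℂ := (starRingEnd ℂ) w * θ / ((2 * |v| : ℝ) : ℂ)
  have hrr_eq : rr = ‖z‖ ^ 2 := by
    rw [hrr, norm_div, norm_mul, norm_conj, norm_real, Real.norm_of_nonneg (by positivity),
      div_pow, mul_pow, mul_pow, sq_abs]
    norm_num
  have hre : 2 * z.re = ((starRingEnd ℂ) w * θ).re / |v| := by
    rw [div_ofReal_re]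
    ring
  have hrt_eq : rt = ‖1 + z‖ ^ 2 := by
    rw [sq_norm_one_add, hre, ← hrr_eq, hrt, hrr]
  refine ⟨hrt_eq, hrt_eq ▸ sq_nonneg _, ?_⟩
  rw [hrt_eq, hrr_eq, Real.sqrt_sq (norm_nonneg _), Real.sqrt_sq (norm_nonneg _)]
  simpa using norm_le_add_norm_add (1 : ℂ) z

/-- For `w, θ ∈ ℂ` and `v ≠ 0`, with
`r_t = 1 + Re(w̄θ)/|v| + |w|²|θ|²/(4v²)` and `r_r = |w|²|θ|²/(4v²)`:
`r_t = |1 + w̄θ/(2|v|)|²`, hence `r_t ≥ 0`, and `√r_t + √r_r ≥ 1`. -/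
theorem sqrt_rates_sum_ge_one (v : ℝ) (hv : v ≠ 0) (w θ : ℂ) (rt rr : ℝ)
    (hrt : rt = 1 + ((starRingEnd ℂ) w * θ).re / |v|
      + ‖w‖ ^ 2 * ‖θ‖ ^ 2 / (4 * v ^ 2))
    (hrr : rr = ‖w‖ ^ 2 * ‖θ‖ ^ 2 / (4 * v ^ 2)) :
    rt = ‖1 + (starRingEnd ℂ) w * θ / ((2 * |v| : ℝ) : ℂ)‖ ^ 2 ∧
    0 ≤ rt ∧
    1 ≤ Real.sqrt rt + Real.sqrt rr :=
  sqrt_rates_sum_ge_one_general v w θ rt rr hrt hrr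
end

section
/- Let c₁ ∈ (0,1), let v ∈ ℝ with v ≠ 0, and let r_t, r_r > 0 satisfy r_t + r_r ≤ 1 − c₁ and √r_t + √r_r ≥ 1. Let L ∈ ℂ with Re L = 1/(2|v|). Set RE := |v|·(r_t − r_r − 1), IM := √(4v²r_r − RE²), FT := RE + i·IM, and TH := 1 + FT·L. Then |TH| ≥ c₁/4. -/
open Complex ComplexConjugate

/-!
Since `‖FT‖² = 4 v² r_r` and `Re L = 1 / (2|v|)`, the real part of `conj FT * TH = conj FT + ‖FT‖² L`
is `RE + 2|v| r_r = -|v| (1 - r_t - r_r)`, of modulus at least `|v| c₁`. As `‖FT‖ ≤ 2|v|`, this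
forces `‖TH‖ ≥ c₁ / 2`. The condition `√r_t + √r_r ≥ 1` is what makes `4 v² r_r - RE² ≥ 0`, so
that `IM` is a genuine square root.
-/

theorem Complex.abs_re_add_normSq_mul_re_le (z w : ℂ) :
    |z.re + normSq z * w.re| ≤ ‖z‖ * ‖1 + z * w‖ := by
  have hre : (conj z * (1 + z * w)).re = z.re + normSq z * w.re := by
    rw [mul_add, mul_one, ← mul_assoc, ← normSq_eq_conj_mul_self, add_re, conj_re,
      re_ofReal_mul]
  calc |z.re + normSq z * w.re| = |(conj z * (1 + z * w)).re| := by rw [hre]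
    _ ≤ ‖conj z * (1 + z * w)‖ := abs_re_le_norm _
    _ = ‖z‖ * ‖1 + z * w‖ := by rw [norm_mul, norm_conj]

theorem Complex.le_norm_one_add_mul {z w : ℂ} {M m : ℝ} (hM : 0 < M) (hz : ‖z‖ ≤ M)
    (hm : M * m ≤ |z.re + normSq z * w.re|) : m ≤ ‖1 + z * w‖ := by
  refine le_of_mul_le_mul_left ?_ hM
  calc M * m ≤ ‖z‖ * ‖1 + z * w‖ := hm.trans (abs_re_add_normSq_mul_re_le z w)
    _ ≤ M * ‖1 + z * w‖ := by gcongr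

/-- With `s = √rr` and `t = √rt`, `(rt - rr - 1)² - 4 rr = -(1 + s - t)(1 + s + t)(t + s - 1)(t + 1 - s)`,
a product of nonnegative factors with a minus sign. -/
theorem sq_sub_sub_one_le_four_mul {rt rr : ℝ} (hrt : 0 ≤ rt) (hrr : 0 ≤ rr)
    (hsum : rt + rr ≤ 1) (hsqrt : 1 ≤ Real.sqrt rt + Real.sqrt rr) :
    (rt - rr - 1) ^ 2 ≤ 4 * rr := by
  set t := Real.sqrt rt
  set s := Real.sqrt rr
  have ht : t ^ 2 = rt := Real.sq_sqrt hrt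
  have hs : s ^ 2 = rr := Real.sq_sqrt hrr
  have ht1 : t ≤ 1 := Real.sqrt_le_one.mpr (by linarith)
  have hs1 : s ≤ 1 := Real.sqrt_le_one.mpr (by linarith)
  have hfactor : (rt - rr - 1) ^ 2 - 4 * rr
      = ((1 + s - t) * (t + 1 + s)) * -((t - 1 + s) * (t + 1 - s)) := by
    rw [← ht, ← hs]; ring
  have hneg : ((1 + s - t) * (t + 1 + s)) * -((t - 1 + s) * (t + 1 - s)) ≤ 0 :=
    mul_nonpos_of_nonneg_of_nonpos
      (mul_nonneg (by linarith [Real.sqrt_nonneg rr]) (by positivity))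
      (neg_nonpos.mpr (mul_nonneg (by linarith) (by linarith)))
  linarith

/-- For `c₁ ∈ (0,1)`, `v ≠ 0`, target rates `r_t, r_r > 0` with `r_t + r_r ≤ 1 - c₁` and
`√r_t + √r_r ≥ 1`, and `L ∈ ℂ` with `Re L = 1/(2|v|)`: setting `RE = |v|(r_t - r_r - 1)`,
`IM = √(4v²r_r - RE²)`, `FT = RE + i·IM` and `TH = 1 + FT·L`, one has `|TH| ≥ c₁/4`. -/
theorem TH_lower_bound (c₁ v : ℝ) (hc₁ : c₁ ∈ Set.Ioo (0 : ℝ) 1) (hv : v ≠ 0)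
    (rt rr : ℝ) (hrt : 0 < rt) (hrr : 0 < rr)
    (hsum : rt + rr ≤ 1 - c₁) (hsqrt : 1 ≤ Real.sqrt rt + Real.sqrt rr)
    (L : ℂ) (hL : L.re = 1 / (2 * |v|))
    (RE IM : ℝ) (FT TH : ℂ)
    (hRE : RE = |v| * (rt - rr - 1))
    (hIM : IM = Real.sqrt (4 * v ^ 2 * rr - RE ^ 2))
    (hFT : FT = (RE : ℂ) + Complex.I * (IM : ℂ))
    (hTH : TH = 1 + FT * L) :
    c₁ / 4 ≤ ‖TH‖ := by
  obtain ⟨hc₀, -⟩ := hc₁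
  have hRE_sq : RE ^ 2 ≤ 4 * v ^ 2 * rr := by
    have := sq_sub_sub_one_le_four_mul hrt.le hrr.le (by linarith) hsqrt
    calc RE ^ 2 = v ^ 2 * (rt - rr - 1) ^ 2 := by rw [hRE, mul_pow, sq_abs]
      _ ≤ v ^ 2 * (4 * rr) := by gcongr
      _ = 4 * v ^ 2 * rr := by ring
  have hnormSq : normSq FT = 4 * v ^ 2 * rr := by
    rw [hFT, hIM, mul_comm I, normSq_add_mul_I, Real.sq_sqrt (by linarith)]
    ring
  have hnorm : ‖FT‖ ≤ 2 * |v| := by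
    rw [← sq_le_sq₀ (norm_nonneg _) (by positivity), ← normSq_eq_norm_sq, hnormSq,
      mul_pow, sq_abs]
    nlinarith [mul_le_mul_of_nonneg_left (by linarith : rr ≤ 1) (sq_nonneg v)]
  have hpair : FT.re + normSq FT * L.re = -(|v| * (1 - rt - rr)) := by
    rw [hnormSq, hL, hFT, ← sq_abs v, hRE]
    simp only [add_re, ofReal_re, mul_re, I_re, I_im, ofReal_im]
    field_simp
    ring
  have hc₁_half : c₁ / 2 ≤ ‖TH‖ := by
    rw [hTH]
    refine Complex.le_norm_one_add_mul (by positivity) hnorm ?_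
    rw [hpair, abs_neg, abs_mul, abs_abs, abs_of_nonneg (by linarith : 0 ≤ 1 - rt - rr)]
    calc 2 * |v| * (c₁ / 2) = |v| * c₁ := by ring
      _ ≤ |v| * (1 - rt - rr) := by gcongr; linarith
  linarith
end
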